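/- arXiv:1904.02694 — 2 statements merged into one kernel-verified Lean document; each statement's English description precedes it below -/
import Mathlib

section
/- For n ≥ 1 and 0 ≤ k < n, the number of inversion sequences of length n avoiding the consecutive pattern 110 and ending in k satisfies |I_{n,k}(110)| = |I_{n-1}(110)| - Σ_{j=k+1}^{n-3} |I_{n-2,j}(110)|, where |I_0(110)| = 1 by convention. -/
def IsInvSeq {n : ℕ} (e : Fin n → Fin n) : Prop := ∀ i : Fin n, (e i : ℕ) ≤ (i : ℕ)

def extSeq {n : ℕ} (e : Fin n → Fin n) : ℕ → ℕ := fun i => if h : i < n then (e ⟨i, h⟩ : ℕ) else 0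

/-- `e` contains the consecutive pattern 110: `e_i = e_{i+1} > e_{i+2}`. -/
def Contains110 {n : ℕ} (e : Fin n → Fin n) : Prop :=
  ∃ i : ℕ, i + 2 < n ∧ extSeq e i = extSeq e (i + 1) ∧ extSeq e (i + 2) < extSeq e (i + 1)

lemma extSeq_le {n : ℕ} {e : Fin n → Fin n} (he : IsInvSeq e) (i : ℕ) : extSeq e i ≤ i := by
  unfold extSeq
  split
  · exact he _
  · exact Nat.zero_le _

def Bad (m k : ℕ) (f : Fin m → Fin m) : Prop :=
  extSeq f (m - 2) = extSeq f (m - 1) ∧ k < extSeq f (m - 1)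

def ext1 {m : ℕ} (f : Fin m → Fin m) (k : ℕ) (hk : k ≤ m) : Fin (m + 1) → Fin (m + 1) :=
  fun i => if h : (i : ℕ) < m then ⟨(f ⟨i, h⟩ : ℕ), by have := (f ⟨i, h⟩).isLt; omega⟩
           else ⟨k, by omega⟩

lemma extSeq_ext1_lt {m : ℕ} (f : Fin m → Fin m) (k : ℕ) (hk : k ≤ m) {i : ℕ} (h : i < m) :
    extSeq (ext1 f k hk) i = extSeq f i := by
  have h1 : i < m + 1 := by omega
  simp [extSeq, ext1, h, h1]

lemma extSeq_ext1_self {m : ℕ} (f : Fin m → Fin m) (k : ℕ) (hk : k ≤ m) :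
    extSeq (ext1 f k hk) m = k := by
  simp [extSeq, ext1]

lemma isInvSeq_ext1 {m : ℕ} {f : Fin m → Fin m} (hf : IsInvSeq f) (k : ℕ) (hk : k ≤ m) :
    IsInvSeq (ext1 f k hk) := by
  intro i
  unfold ext1
  split
  · next h => exact hf ⟨i, h⟩
  · next h => simp only []; omega

def trunc1 {m : ℕ} (f : Fin (m + 1) → Fin (m + 1)) (hf : IsInvSeq f) : Fin m → Fin m :=
  fun i => ⟨(f ⟨i.1, by omega⟩ : ℕ), lt_of_le_of_lt (hf ⟨i.1, by omega⟩) i.2⟩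

lemma extSeq_trunc1 {m : ℕ} (f : Fin (m + 1) → Fin (m + 1)) (hf : IsInvSeq f) {i : ℕ}
    (h : i < m) : extSeq (trunc1 f hf) i = extSeq f i := by
  have h1 : i < m + 1 := by omega
  simp [extSeq, trunc1, h, h1]

lemma isInvSeq_trunc1 {m : ℕ} (f : Fin (m + 1) → Fin (m + 1)) (hf : IsInvSeq f) :
    IsInvSeq (trunc1 f hf) := fun i => hf _

lemma ext1_trunc1 {m : ℕ} (f : Fin (m + 1) → Fin (m + 1)) (hf : IsInvSeq f) (k : ℕ)
    (hk : k ≤ m) (hlast : extSeq f m = k) : ext1 (trunc1 f hf) k hk = f := by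
  funext i
  unfold ext1 trunc1
  split
  · next h => exact Fin.ext rfl
  · next h =>
    have hb := i.isLt
    have hv : (i : ℕ) = m := by omega
    apply Fin.ext
    have hfi : f i = f ⟨m, by omega⟩ := congrArg f (Fin.ext hv)
    rw [hfi]
    simp only [extSeq, Nat.lt_succ_self, dif_pos] at hlast
    exact hlast.symm

lemma trunc1_ext1 {m : ℕ} (f : Fin m → Fin m) (k : ℕ) (hk : k ≤ m)
    (h2 : IsInvSeq (ext1 f k hk)) : trunc1 (ext1 f k hk) h2 = f := by
  funext i
  apply Fin.ext
  simp [trunc1, ext1, i.2]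

lemma contains_ext1 {m : ℕ} (f : Fin m → Fin m) (k : ℕ) (hk : k ≤ m) (hf : IsInvSeq f) :
    Contains110 (ext1 f k hk) ↔ Contains110 f ∨ Bad m k f := by
  constructor
  · rintro ⟨i, hi, h1, h2⟩
    by_cases hc : i + 2 < m
    · left
      rw [extSeq_ext1_lt f k hk (i := i) (by omega),
        extSeq_ext1_lt f k hk (i := i + 1) (by omega)] at h1
      rw [extSeq_ext1_lt f k hk (i := i + 2) (by omega),
        extSeq_ext1_lt f k hk (i := i + 1) (by omega)] at h2
      exact ⟨i, hc, h1, h2⟩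
    · have hm : i + 2 = m := by omega
      right
      rw [extSeq_ext1_lt f k hk (i := i) (by omega),
        extSeq_ext1_lt f k hk (i := i + 1) (by omega)] at h1
      rw [show i + 2 = m from hm, extSeq_ext1_self,
        extSeq_ext1_lt f k hk (i := i + 1) (by omega)] at h2
      constructor
      · rw [show m - 2 = i from by omega, show m - 1 = i + 1 from by omega]
        exact h1
      · rw [show m - 1 = i + 1 from by omega]
        exact h2
  · rintro (⟨i, hi, h1, h2⟩ | ⟨hb1, hb2⟩)
    · refine ⟨i, by omega, ?_, ?_⟩
      · rw [extSeq_ext1_lt f k hk (i := i) (by omega),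
          extSeq_ext1_lt f k hk (i := i + 1) (by omega)]
        exact h1
      · rw [extSeq_ext1_lt f k hk (i := i + 2) (by omega),
          extSeq_ext1_lt f k hk (i := i + 1) (by omega)]
        exact h2
    · have h3 : extSeq f (m - 1) ≤ m - 1 := extSeq_le hf _
      have h4 : extSeq f (m - 2) ≤ m - 2 := extSeq_le hf _
      have hm : 3 ≤ m := by omega
      refine ⟨m - 2, by omega, ?_, ?_⟩
      · rw [extSeq_ext1_lt f k hk (i := m - 2) (by omega),
          extSeq_ext1_lt f k hk (i := m - 2 + 1) (by omega),
          show m - 2 + 1 = m - 1 from by omega]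
        exact hb1
      · rw [show m - 2 + 2 = m from by omega, show m - 2 + 1 = m - 1 from by omega,
          extSeq_ext1_self, extSeq_ext1_lt f k hk (i := m - 1) (by omega)]
        exact hb2

lemma card_split {α : Type*} [Finite α] (p q : α → Prop) :
    Nat.card {x // p x} = Nat.card {x // p x ∧ q x} + Nat.card {x // p x ∧ ¬ q x} := by
  classical
  rw [← Nat.card_sum]
  apply Nat.card_congr
  refine (Equiv.sumCompl fun x : {x // p x} => q x.1).symm.trans ?_
  exact Equiv.sumCongr (Equiv.subtypeSubtypeEquivSubtypeInter p q)
    (Equiv.subtypeSubtypeEquivSubtypeInter p fun x => ¬ q x)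

lemma card_fiberwise {α : Type*} [Finite α] (φ : α → ℕ) (s : Finset ℕ)
    (h : ∀ a, φ a ∈ s) : Nat.card α = ∑ j ∈ s, Nat.card {a // φ a = j} := by
  classical
  cases nonempty_fintype α
  simp_rw [Nat.card_eq_fintype_card]
  rw [← Finset.card_univ, Finset.card_eq_sum_card_fiberwise (f := φ) (fun a _ => h a)]
  refine Finset.sum_congr rfl fun j _ => ?_
  rw [Fintype.card_subtype]

lemma card_ext (m k : ℕ) (hk : k ≤ m) :
    Nat.card {e : Fin (m + 1) → Fin (m + 1) // IsInvSeq e ∧ ¬Contains110 e ∧ extSeq e m = k}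
    = Nat.card {f : Fin m → Fin m // IsInvSeq f ∧ ¬Contains110 f ∧ ¬ Bad m k f} := by
  apply Nat.card_congr
  refine ⟨fun e => ⟨trunc1 e.1 e.2.1, ?_⟩, fun f => ⟨ext1 f.1 k hk, ?_⟩, ?_, ?_⟩
  · obtain ⟨e, h1, h2, h3⟩ := e
    have hC : ¬ (Contains110 (trunc1 e h1) ∨ Bad m k (trunc1 e h1)) := by
      rw [← contains_ext1 _ k hk (isInvSeq_trunc1 e h1), ext1_trunc1 e h1 k hk h3]
      exact h2
    push_neg at hC
    exact ⟨isInvSeq_trunc1 e h1, hC.1, hC.2⟩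
  · obtain ⟨f, h1, h2, h3⟩ := f
    refine ⟨isInvSeq_ext1 h1 k hk, ?_, extSeq_ext1_self f k hk⟩
    rw [contains_ext1 f k hk h1]
    rintro (hc | hb)
    · exact h2 hc
    · exact h3 hb
  · rintro ⟨e, h1, h2, h3⟩
    exact Subtype.ext (ext1_trunc1 e h1 k hk h3)
  · rintro ⟨f, h1, h2, h3⟩
    exact Subtype.ext (trunc1_ext1 f k hk (isInvSeq_ext1 h1 k hk))

/-- `|I_n(110)|`. -/
noncomputable def I110 (n : ℕ) : ℕ := Nat.card {e : Fin n → Fin n // IsInvSeq e ∧ ¬ Contains110 e}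

/-- `|I_{n,k}(110)|`: those with last entry equal to `k`. -/
noncomputable def I110k (n k : ℕ) : ℕ :=
  Nat.card {e : Fin n → Fin n // IsInvSeq e ∧ ¬ Contains110 e ∧ extSeq e (n - 1) = k}

lemma card_bad (t k : ℕ) :
    Nat.card {f : Fin (t + 1) → Fin (t + 1) // IsInvSeq f ∧ ¬Contains110 f ∧ Bad (t + 1) k f}
    = ∑ j ∈ Finset.Icc (k + 1) (t - 1), I110k t j := by
  classical
  rw [card_fiberwise (fun a => extSeq a.1 t) (Finset.Icc (k + 1) (t - 1)) ?hmem]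
  case hmem =>
    rintro ⟨f, h1, h2, hb1, hb2⟩
    replace hb1 : extSeq f (t - 1) = extSeq f t := hb1
    replace hb2 : k < extSeq f t := hb2
    have h3 := extSeq_le h1 (t - 1)
    simp only [Finset.mem_Icc]
    show k + 1 ≤ extSeq f t ∧ extSeq f t ≤ t - 1
    omega
  refine Finset.sum_congr rfl fun j hj => ?_
  simp only [Finset.mem_Icc] at hj
  have ht : 2 ≤ t := by omega
  have hjt : j ≤ t := by omega
  unfold I110k
  apply Nat.card_congr
  refine ⟨fun a => ⟨trunc1 a.1.1 a.1.2.1, ?_⟩, fun g => ⟨⟨ext1 g.1 j hjt, ?_⟩, ?_⟩, ?_, ?_⟩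
  · obtain ⟨⟨f, h1, h2, hb1, hb2⟩, hlast⟩ := a
    replace hb1 : extSeq f (t - 1) = extSeq f t := hb1
    replace hlast : extSeq f t = j := hlast
    show IsInvSeq (trunc1 f h1) ∧ ¬Contains110 (trunc1 f h1) ∧ extSeq (trunc1 f h1) (t - 1) = j
    refine ⟨isInvSeq_trunc1 f h1, ?_, ?_⟩
    · rintro ⟨i, hi, c1, c2⟩
      rw [extSeq_trunc1 f h1 (i := i) (by omega),
        extSeq_trunc1 f h1 (i := i + 1) (by omega)] at c1
      rw [extSeq_trunc1 f h1 (i := i + 2) (by omega),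
        extSeq_trunc1 f h1 (i := i + 1) (by omega)] at c2
      exact h2 ⟨i, by omega, c1, c2⟩
    · rw [extSeq_trunc1 f h1 (i := t - 1) (by omega)]
      omega
  · obtain ⟨g, h1, h2, hg⟩ := g
    show IsInvSeq (ext1 g j hjt) ∧ ¬Contains110 (ext1 g j hjt) ∧ Bad (t + 1) k (ext1 g j hjt)
    refine ⟨isInvSeq_ext1 h1 j hjt, ?_, ?_, ?_⟩
    · rw [contains_ext1 g j hjt h1]
      rintro (hc | ⟨hb1, hb2⟩)
      · exact h2 hc
      · rw [hg] at hb2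
        omega
    · show extSeq (ext1 g j hjt) (t - 1) = extSeq (ext1 g j hjt) t
      rw [extSeq_ext1_lt g j hjt (i := t - 1) (by omega), extSeq_ext1_self, hg]
    · show k < extSeq (ext1 g j hjt) t
      rw [extSeq_ext1_self]
      omega
  · exact extSeq_ext1_self g.1 j hjt
  · rintro ⟨⟨f, h1, h2, hb⟩, hlast⟩
    apply Subtype.ext
    apply Subtype.ext
    exact ext1_trunc1 f h1 j hjt hlast
  · rintro ⟨g, h1, h2, hg⟩
    apply Subtype.ext
    exact trunc1_ext1 g j hjt (isInvSeq_ext1 h1 j hjt)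

theorem stmt3 (n : ℕ) (hn : 1 ≤ n) (k : ℕ) (hk : k < n) :
    I110k n k = I110 (n - 1) - ∑ j ∈ Finset.Icc (k + 1) (n - 3), I110k (n - 2) j := by
  obtain ⟨m, rfl⟩ : ∃ m, n = m + 1 := ⟨n - 1, by omega⟩
  have hk' : k ≤ m := by omega
  have hA : I110k (m + 1) k
      = Nat.card {f : Fin m → Fin m // IsInvSeq f ∧ ¬Contains110 f ∧ ¬ Bad m k f} := by
    unfold I110k
    rw [show m + 1 - 1 = m from by omega]
    exact card_ext m k hk'
  have hsplit : I110 m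
      = Nat.card {f : Fin m → Fin m // IsInvSeq f ∧ ¬Contains110 f ∧ Bad m k f}
      + Nat.card {f : Fin m → Fin m // IsInvSeq f ∧ ¬Contains110 f ∧ ¬ Bad m k f} := by
    unfold I110
    rw [card_split (fun f => IsInvSeq f ∧ ¬Contains110 f) (Bad m k)]
    congr 1 <;> exact Nat.card_congr (Equiv.subtypeEquivRight fun f => by tauto)
  simp only [Nat.add_sub_cancel]
  rcases m with _ | t
  · have hs : Finset.Icc (k + 1) (0 + 1 - 3) = ∅ := Finset.Icc_eq_empty (by omega)
    have hB : Nat.card {f : Fin 0 → Fin 0 // IsInvSeq f ∧ ¬Contains110 f ∧ Bad 0 k f} = 0 := by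
      have : IsEmpty {f : Fin 0 → Fin 0 // IsInvSeq f ∧ ¬Contains110 f ∧ Bad 0 k f} := by
        refine ⟨fun x => ?_⟩
        obtain ⟨f, h1, h2, hb1, hb2⟩ := x
        simp [extSeq] at hb2
      exact Nat.card_of_isEmpty
    rw [hA, hsplit, hs, hB]
    simp
  · rw [show t + 1 + 1 - 3 = t - 1 from by omega, show t + 1 + 1 - 2 = t from by omega,
      hA, hsplit, ← card_bad t k]
    omega
end

section
/- For all n, the number of inversion sequences of length n avoiding the consecutive pattern 012 equals the number of permutations of {1,...,n} avoiding the consecutive pattern 321 (i.e., having no descending run of length 3). -/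
/-- `f` (a sequence of length `n`) contains the consecutive pattern 012:
three adjacent strictly increasing entries. -/
def Contains012 (n : ℕ) (f : ℕ → ℕ) : Prop :=
  ∃ i : ℕ, i + 2 < n ∧ f i < f (i + 1) ∧ f (i + 1) < f (i + 2)

/-- A permutation contains the consecutive pattern 321: three adjacent strictly
decreasing entries. -/
def ContainsDesc3 (n : ℕ) (f : ℕ → ℕ) : Prop :=
  ∃ i : ℕ, i + 2 < n ∧ f (i + 2) < f (i + 1) ∧ f (i + 1) < f i

open Finset

section Theta
variable {n : ℕ}

/-- the count of left inversions at position i -/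
def thetaCount (π : Equiv.Perm (Fin n)) (i : Fin n) : ℕ :=
  (univ.filter (fun j : Fin n => j < i ∧ π i < π j)).card

lemma thetaCount_le (π : Equiv.Perm (Fin n)) (i : Fin n) : thetaCount π i ≤ (i : ℕ) := by
  have h1 : (univ.filter (fun j : Fin n => j < i ∧ π i < π j)) ⊆ Iio i := by
    intro j hj
    simp only [mem_filter] at hj
    simpa using hj.2.1
  calc thetaCount π i ≤ (Iio i).card := card_le_card h1
    _ = (i : ℕ) := by simp

def theta (π : Equiv.Perm (Fin n)) : Fin n → Fin n :=
  fun i => ⟨thetaCount π i, lt_of_le_of_lt (thetaCount_le π i) i.isLt⟩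

lemma theta_invSeq (π : Equiv.Perm (Fin n)) : IsInvSeq (theta π) :=
  fun i => thetaCount_le π i

/-- descent correspondence -/
lemma theta_lt_iff (π : Equiv.Perm (Fin n)) (i j : Fin n) (hij : (i : ℕ) + 1 = (j : ℕ)) :
    thetaCount π i < thetaCount π j ↔ π j < π i := by
  have hij' : i < j := by rw [Fin.lt_iff_val_lt_val]; omega
  constructor
  · intro h
    by_contra hc
    push_neg at hc
    have hne : π i ≠ π j := fun he => absurd (π.injective he) (Fin.ne_of_lt hij')
    have hlt : π i < π j := lt_of_le_of_ne hc hne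
    have hsub : (univ.filter (fun k : Fin n => k < j ∧ π j < π k)) ⊆
        (univ.filter (fun k : Fin n => k < i ∧ π i < π k)) := by
      intro k hk
      simp only [mem_filter, mem_univ, true_and] at hk ⊢
      obtain ⟨hk1, hk2⟩ := hk
      have hki : k ≠ i := by
        rintro rfl; exact absurd hlt (not_lt.mpr hk2.le)
      have : (k : ℕ) < (i : ℕ) + 1 := by rw [hij]; exact hk1
      refine ⟨by rw [Fin.lt_iff_val_lt_val]; omega, lt_trans hlt hk2⟩
    exact absurd (card_le_card hsub) (not_le.mpr h)
  · intro h
    have hsub : (univ.filter (fun k : Fin n => k < i ∧ π i < π k)) ⊂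
        (univ.filter (fun k : Fin n => k < j ∧ π j < π k)) := by
      constructor
      · intro k hk
        simp only [mem_filter, mem_univ, true_and] at hk ⊢
        exact ⟨lt_trans hk.1 hij', lt_trans h hk.2⟩
      · intro hc
        have : i ∈ (univ.filter (fun k : Fin n => k < j ∧ π j < π k)) := by
          simp only [mem_filter, mem_univ, true_and]
          exact ⟨hij', h⟩
        have := hc this
        simp only [mem_filter, mem_univ, true_and] at this
        exact absurd this.1 (lt_irrefl i)
    exact card_lt_card hsub

lemma theta_ge_iff (π : Equiv.Perm (Fin n)) (i j : Fin n) (hij : (i : ℕ) + 1 = (j : ℕ)) :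
    (¬ thetaCount π i < thetaCount π j) ↔ π i < π j := by
  rw [theta_lt_iff π i j hij]
  have hne : π i ≠ π j := fun he => absurd (π.injective he)
    (Fin.ne_of_lt (by rw [Fin.lt_iff_val_lt_val]; omega))
  constructor
  · intro h; exact lt_of_le_of_ne (not_lt.mp h) hne
  · intro h; exact not_lt.mpr h.le

/-- rank identity: thetaCount determines rank among first i+1 values -/
lemma rank_eq (π : Equiv.Perm (Fin n)) (i : Fin n) :
    ((univ.filter (fun k : Fin n => k ≤ i)).image π).filter (fun v => v ≤ π i) =
      (univ.filter (fun k : Fin n => k ≤ i ∧ π k ≤ π i)).image π := by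
  ext v
  simp only [mem_filter, mem_image, mem_univ, true_and]
  constructor
  · rintro ⟨⟨k, hk, rfl⟩, hv⟩
    exact ⟨k, ⟨hk, hv⟩, rfl⟩
  · rintro ⟨k, ⟨hk, hv⟩, rfl⟩
    exact ⟨⟨k, hk, rfl⟩, hv⟩

lemma card_rank (π : Equiv.Perm (Fin n)) (i : Fin n) :
    (((univ.filter (fun k : Fin n => k ≤ i)).image π).filter (fun v => v ≤ π i)).card
      = (i : ℕ) + 1 - thetaCount π i := by
  rw [rank_eq, card_image_of_injective _ π.injective]
  have hsplit := card_filter_add_card_filter_not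
    (s := univ.filter (fun k : Fin n => k ≤ i)) (p := fun k => π k ≤ π i)
  rw [filter_filter, filter_filter] at hsplit
  have hIic : (univ.filter (fun k : Fin n => k ≤ i)).card = (i : ℕ) + 1 := by
    have : univ.filter (fun k : Fin n => k ≤ i) = Iic i := by ext k; simp
    rw [this, Fin.card_Iic]
  have hneg : (univ.filter (fun k : Fin n => k ≤ i ∧ ¬ π k ≤ π i)).card = thetaCount π i := by
    unfold thetaCount
    congr 1
    apply filter_congr
    intro k _
    simp only [not_le]
    constructor
    · rintro ⟨h1, h2⟩
      have : k ≠ i := by rintro rfl; exact absurd h2 (lt_irrefl _)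
      exact ⟨lt_of_le_of_ne h1 this, h2⟩
    · rintro ⟨h1, h2⟩; exact ⟨h1.le, h2⟩
  omega

lemma theta_injective : Function.Injective (theta (n := n)) := by
  intro π σ h
  by_contra hne
  have hD : (univ.filter (fun k : Fin n => π k ≠ σ k)).Nonempty := by
    rw [filter_nonempty_iff]
    by_contra hc
    push_neg at hc
    exact hne (Equiv.ext (fun k => hc k (mem_univ k)))
  set D := univ.filter (fun k : Fin n => π k ≠ σ k) with hDdef
  obtain ⟨i, hiD, hmax⟩ := D.exists_max_image id hD
  have hiD' : π i ≠ σ i := by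
    rw [hDdef, mem_filter] at hiD; exact hiD.2
  -- for k > i, π k = σ k
  have htail : ∀ k : Fin n, i < k → π k = σ k := by
    intro k hk
    by_contra hc
    have : k ∈ D := by rw [hDdef, mem_filter]; exact ⟨mem_univ k, hc⟩
    exact absurd (hmax k this) (not_le.mpr hk)
  -- images of the prefix agree
  have himg : (univ.filter (fun k : Fin n => k ≤ i)).image π
      = (univ.filter (fun k : Fin n => k ≤ i)).image σ := by
    have htailimg : (univ.filter (fun k : Fin n => i < k)).image π
        = (univ.filter (fun k : Fin n => i < k)).image σ :=
      image_congr (fun k hk => htail k (by simpa using (mem_filter.mp hk).2))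
    have hcompl : ∀ (τ : Equiv.Perm (Fin n)),
        (univ.filter (fun k : Fin n => k ≤ i)).image τ
          = univ \ ((univ.filter (fun k : Fin n => i < k)).image τ) := by
      intro τ
      ext v
      simp only [mem_image, mem_filter, mem_univ, true_and, mem_sdiff, not_exists, not_and]
      constructor
      · rintro ⟨k, hk, rfl⟩
        intro m hm hmv
        have := τ.injective hmv
        subst this
        exact absurd hk (not_le.mpr hm)
      · intro hv
        refine ⟨τ.symm v, ?_, by simp⟩
        by_contra hc
        push_neg at hc
        exact hv (τ.symm v) hc (by simp)
    rw [hcompl π, hcompl σ, htailimg]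
  -- equal thetaCounts give equal ranks
  have hθ : thetaCount π i = thetaCount σ i := by
    have := congrFun h i
    simpa [theta, Fin.ext_iff] using this
  have hrank : (((univ.filter (fun k : Fin n => k ≤ i)).image π).filter
        (fun v => v ≤ π i)).card
      = (((univ.filter (fun k : Fin n => k ≤ i)).image σ).filter
        (fun v => v ≤ σ i)).card := by
    rw [card_rank, card_rank, hθ]
  rw [himg] at hrank
  set S := (univ.filter (fun k : Fin n => k ≤ i)).image σ with hS
  have hπS : π i ∈ S := by
    rw [← himg]; exact mem_image_of_mem π (by simp)
  have hσS : σ i ∈ S := mem_image_of_mem σ (by simp)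
  -- ranks within S are injective
  have : π i = σ i := by
    by_contra hc
    rcases lt_or_gt_of_ne hc with hlt | hlt
    · have hssub : S.filter (fun v => v ≤ π i) ⊂ S.filter (fun v => v ≤ σ i) := by
        constructor
        · intro v hv
          rw [mem_filter] at hv ⊢
          exact ⟨hv.1, le_trans hv.2 hlt.le⟩
        · intro hcc
          have h1 : σ i ∈ S.filter (fun v => v ≤ σ i) := mem_filter.mpr ⟨hσS, le_refl _⟩
          have := mem_filter.mp (hcc h1)
          exact absurd this.2 (not_le.mpr hlt)
      exact absurd hrank (Nat.ne_of_lt (card_lt_card hssub))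
    · have hssub : S.filter (fun v => v ≤ σ i) ⊂ S.filter (fun v => v ≤ π i) := by
        constructor
        · intro v hv
          rw [mem_filter] at hv ⊢
          exact ⟨hv.1, le_trans hv.2 hlt.le⟩
        · intro hcc
          have h1 : π i ∈ S.filter (fun v => v ≤ π i) := mem_filter.mpr ⟨hπS, le_refl _⟩
          have := mem_filter.mp (hcc h1)
          exact absurd this.2 (not_le.mpr hlt)
      exact absurd hrank.symm (Nat.ne_of_lt (card_lt_card hssub))
  exact hiD' this

end Theta

section Count
variable {n : ℕ}

instance : DecidablePred (IsInvSeq (n := n)) :=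
  fun e => decidable_of_iff (∀ i : Fin n, (e i : ℕ) ≤ (i : ℕ)) Iff.rfl

def invSeqEquiv : {e : Fin n → Fin n // IsInvSeq e} ≃ (∀ i : Fin n, Fin ((i : ℕ) + 1)) where
  toFun e i := ⟨(e.1 i : ℕ), Nat.lt_succ_of_le (e.2 i)⟩
  invFun f := ⟨fun i => ⟨(f i : ℕ), lt_of_lt_of_le (f i).isLt (Nat.succ_le_of_lt i.isLt)⟩,
    fun i => Nat.lt_succ_iff.mp (f i).isLt⟩
  left_inv e := by ext i; simp
  right_inv f := by ext i; simp

lemma card_invSeq : Fintype.card {e : Fin n → Fin n // IsInvSeq e} = Nat.factorial n := by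
  rw [Fintype.card_congr invSeqEquiv, Fintype.card_pi]
  simp only [Fintype.card_fin]
  rw [Fin.prod_univ_eq_prod_range (fun i => i + 1)]
  exact Finset.prod_range_add_one_eq_factorial n

def thetaSub (π : Equiv.Perm (Fin n)) : {e : Fin n → Fin n // IsInvSeq e} :=
  ⟨theta π, theta_invSeq π⟩

lemma thetaSub_bijective : Function.Bijective (thetaSub (n := n)) := by
  rw [Fintype.bijective_iff_injective_and_card]
  refine ⟨fun π σ h => theta_injective (congrArg Subtype.val h), ?_⟩
  rw [card_invSeq, Fintype.card_perm, Fintype.card_fin]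

lemma contains_iff (π : Equiv.Perm (Fin n)) :
    Contains012 n (extSeq (theta π)) ↔ ContainsDesc3 n (extSeq ⇑π) := by
  unfold Contains012 ContainsDesc3
  apply exists_congr
  intro i
  constructor
  · rintro ⟨h2, ha, hb⟩
    have hi : i < n := by omega
    have hi1 : i + 1 < n := by omega
    refine ⟨h2, ?_, ?_⟩
    · rw [extSeq, extSeq, dif_pos h2, dif_pos hi1]
      rw [extSeq, extSeq, dif_pos hi1, dif_pos h2] at hb
      have := (theta_lt_iff π ⟨i+1, hi1⟩ ⟨i+2, h2⟩ rfl).mp (by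
        simpa [theta] using hb)
      exact this
    · rw [extSeq, extSeq, dif_pos hi1, dif_pos hi]
      rw [extSeq, extSeq, dif_pos hi, dif_pos hi1] at ha
      exact (theta_lt_iff π ⟨i, hi⟩ ⟨i+1, hi1⟩ rfl).mp (by simpa [theta] using ha)
  · rintro ⟨h2, ha, hb⟩
    have hi : i < n := by omega
    have hi1 : i + 1 < n := by omega
    refine ⟨h2, ?_, ?_⟩
    · rw [extSeq, extSeq, dif_pos hi, dif_pos hi1]
      rw [extSeq, extSeq, dif_pos hi1, dif_pos hi] at hb
      have := (theta_lt_iff π ⟨i, hi⟩ ⟨i+1, hi1⟩ rfl).mpr (by exact hb)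
      simpa [theta] using this
    · rw [extSeq, extSeq, dif_pos hi1, dif_pos h2]
      rw [extSeq, extSeq, dif_pos h2, dif_pos hi1] at ha
      have := (theta_lt_iff π ⟨i+1, hi1⟩ ⟨i+2, h2⟩ rfl).mpr (by exact ha)
      simpa [theta] using this

end Count

theorem stmt10 (n : ℕ) :
    Nat.card {e : Fin n → Fin n // IsInvSeq e ∧ ¬ Contains012 n (extSeq e)} =
    Nat.card {π : Equiv.Perm (Fin n) // ¬ ContainsDesc3 n (extSeq (⇑π))} := by
  let E2 : Equiv.Perm (Fin n) ≃ {e : Fin n → Fin n // IsInvSeq e} :=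
    Equiv.ofBijective thetaSub thetaSub_bijective
  have hE2 : ∀ π, (E2 π).1 = theta π := fun π => rfl
  have Ea : {e : Fin n → Fin n // IsInvSeq e ∧ ¬ Contains012 n (extSeq e)} ≃
      {x : {e : Fin n → Fin n // IsInvSeq e} // ¬ Contains012 n (extSeq x.1)} :=
    (Equiv.subtypeSubtypeEquivSubtypeInter _ _).symm
  have Eb : {π : Equiv.Perm (Fin n) // ¬ ContainsDesc3 n (extSeq (⇑π))} ≃
      {x : {e : Fin n → Fin n // IsInvSeq e} // ¬ Contains012 n (extSeq x.1)} :=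
    E2.subtypeEquiv (fun π => by rw [hE2, contains_iff])
  exact Nat.card_congr (Ea.trans Eb.symm)
end
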